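/- With the path-word map P as above extended to binary planar forests (a forest is an ordered tuple of binary trees, with P(f)_i being the path word from the root of the tree containing leaf i to leaf i), let p and q be forests each with m leaves, and let σ be a cyclic rotation in the cyclic subgroup Z/mZ of the symmetric group S_m. If P(p)_i = P(q)_{σ(i)} for all i, then p and q have the same number of roots n, and there exists a ≥ 0 such that for every 1 ≤ j ≤ n the j-th tree of p equals the (j+a mod n)-th tree of q. -/

import Mathlib

/-- Binary planar trees. -/
inductive BTree
  | leaf : BTree
  | node : BTree → BTree → BTree
deriving DecidableEq

namespace BTree

/-- The free group F₂ = ⟨a,b⟩. -/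
abbrev F2 := FreeGroup (Fin 2)

def a : F2 := FreeGroup.of 0
def b : F2 := FreeGroup.of 1

/-- Path words of a binary planar tree, indexed by its leaves from left to right. -/
def pathWords : BTree → List F2
  | leaf => [1]
  | node l r => (pathWords l).map (· * a) ++ (pathWords r).map (· * b)

/-- A binary planar forest is an ordered list of binary planar trees; its path words are
the path words of its trees, computed within each tree, leaves numbered left to right. -/
def forestWords (f : List BTree) : List F2 := (f.map pathWords).flatten

end BTree


/-!
Every leaf path of a binary tree except the rightmost one contains the letter `a`. Hence in the
list of path words of a forest the trees end exactly after the `a`-free words, and the forest can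
be read back from that list. If the leaf words of `p` are those of `q` rotated, the rotation ends
with the last, `a`-free, word of `p`, so it cuts the word list of `q` at a tree boundary and
rotates whole trees. Positive words embed into the free group, so the argument is carried out on
lists over `Fin 2`.
-/

open BTree

namespace List

variable {α : Type*}

theorem eq_of_append_eq_append_of_forall (Q : α → Bool)
    {A B C D : List α} (hA : ∀ x ∈ A, Q x) (hB : ∀ x ∈ B, ¬Q x) (hC : ∀ x ∈ C, Q x)
    (hD : ∀ x ∈ D, ¬Q x) (h : A ++ B = C ++ D) : A = C ∧ B = D := by
  have hAC : A = C := by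
    simpa [filter_append, filter_eq_self.2 hA, filter_eq_self.2 hC,
      filter_eq_nil_iff.2 hB, filter_eq_nil_iff.2 hD] using congrArg (filter Q) h
  exact ⟨hAC, append_cancel_left (hAC ▸ h)⟩

def IsMarkedBlock (P : α → Prop) (B : List α) : Prop :=
  ∃ ws w, B = ws ++ [w] ∧ (∀ u ∈ ws, ¬P u) ∧ P w

def splitAfter (P : α → Prop) [DecidablePred P] : List α → List (List α)
  | [] => []
  | x :: l =>
    if P x then [x] :: splitAfter P l
    else match splitAfter P l with
      | [] => [[x]]
      | B :: Bs => (x :: B) :: Bs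

variable {P : α → Prop}

theorem forall_mem_getLast?_flatten {L : List (List α)} (hL : ∀ B ∈ L, IsMarkedBlock P B) :
    ∀ x ∈ L.flatten.getLast?, P x := by
  rcases L.eq_nil_or_concat' with rfl | ⟨L, B, rfl⟩
  · simp
  obtain ⟨ws, w, rfl, -, hw⟩ := hL B (by simp)
  simpa using hw

variable [DecidablePred P]

theorem splitAfter_eq_nil_iff {l : List α} : splitAfter P l = [] ↔ l = [] := by
  cases l with
  | nil => simp [splitAfter]
  | cons x l =>
    simp only [splitAfter, reduceCtorEq, iff_false]
    split_ifs
    · simp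
    · split <;> simp

theorem splitAfter_append {X : List α} (Y : List α) (hX : ∀ x ∈ X.getLast?, P x) :
    splitAfter P (X ++ Y) = splitAfter P X ++ splitAfter P Y := by
  induction X with
  | nil => rfl
  | cons x X ih =>
    rcases eq_or_ne X [] with rfl | hne
    · simp [splitAfter, hX x (by simp)]
    have ih := ih fun y hy =>
      hX y (by simpa [getLast?_cons, getLast?_eq_some_getLast hne] using hy)
    obtain ⟨B, Bs, hBs⟩ := ne_nil_iff_exists_cons.1 (mt (splitAfter_eq_nil_iff (P := P)).1 hne)
    by_cases hx : P x <;> simp [splitAfter, hx, ih, hBs]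

theorem splitAfter_of_isMarkedBlock {B : List α} (hB : IsMarkedBlock P B) :
    splitAfter P B = [B] := by
  obtain ⟨ws, w, rfl, hws, hw⟩ := hB
  induction ws with
  | nil => simp [splitAfter, hw]
  | cons u ws ih => simp_all [splitAfter]

theorem splitAfter_flatten {L : List (List α)} (hL : ∀ B ∈ L, IsMarkedBlock P B) :
    splitAfter P L.flatten = L := by
  induction L with
  | nil => rfl
  | cons B L ih =>
    obtain ⟨ws, w, rfl, -, hw⟩ := hL B mem_cons_self
    rw [flatten_cons, splitAfter_append _ (by simpa using hw),
      splitAfter_of_isMarkedBlock (hL _ mem_cons_self), ih fun B hB => hL B (mem_cons_of_mem _ hB)]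
    rfl

theorem exists_eq_rotate_of_flatten_eq_rotate {L L' : List (List α)}
    (hL : ∀ B ∈ L, IsMarkedBlock P B) (hL' : ∀ B ∈ L', IsMarkedBlock P B) {k : ℕ}
    (h : L'.flatten = L.flatten.rotate k) : ∃ n, L' = L.rotate n := by
  set F := L.flatten
  rw [rotate_eq_drop_append_take_mod] at h
  set X := F.take (k % F.length)
  set Y := F.drop (k % F.length)
  have of_append {A B : List α} (hAB : ∀ x ∈ (A ++ B).getLast?, P x) :
      ∀ x ∈ B.getLast?, P x := fun x hx => hAB x (by simp_all [getLast?_append])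
  have hX : ∀ x ∈ X.getLast?, P x := of_append (h ▸ forall_mem_getLast?_flatten hL')
  have hY : ∀ x ∈ Y.getLast?, P x :=
    of_append (A := X) (by rw [take_append_drop]; exact forall_mem_getLast?_flatten hL)
  refine ⟨(splitAfter P X).length, ?_⟩
  calc L' = splitAfter P (Y ++ X) := by rw [← h, splitAfter_flatten hL']
    _ = (splitAfter P X ++ splitAfter P Y).rotate (splitAfter P X).length := by
      rw [splitAfter_append _ hY, rotate_append_length_eq]
    _ = L.rotate (splitAfter P X).length := by
      rw [← splitAfter_append _ hX, take_append_drop, splitAfter_flatten hL]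

end List

namespace BTree

/-- Leaf paths as positive words, `0` standing for `a` and `1` for `b`. -/
def leafPaths : BTree → List (List (Fin 2))
  | leaf => [[]]
  | node l r => (leafPaths l).map (· ++ [0]) ++ (leafPaths r).map (· ++ [1])

theorem nil_mem_leafPaths_iff {t : BTree} : [] ∈ leafPaths t ↔ t = leaf := by
  cases t <;> simp [leafPaths]

theorem leafPaths_injective : Function.Injective leafPaths := by
  intro s t h
  induction s generalizing t with
  | leaf => exact (nil_mem_leafPaths_iff.1 (h ▸ nil_mem_leafPaths_iff.2 rfl)).symm
  | node l r ihl ihr =>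
    cases t with
    | leaf => cases nil_mem_leafPaths_iff.1 (h ▸ nil_mem_leafPaths_iff.2 rfl)
    | node l' r' =>
      obtain ⟨hl, hr⟩ := List.eq_of_append_eq_append_of_forall (·.getLast? == some 0)
        (by simp) (by simp) (by simp) (by simp) h
      rw [ihl ((List.map_injective_iff.2 (List.append_left_injective _)) hl),
        ihr ((List.map_injective_iff.2 (List.append_left_injective _)) hr)]

theorem isMarkedBlock_leafPaths (t : BTree) : (leafPaths t).IsMarkedBlock (0 ∉ ·) := by
  induction t with
  | leaf => exact ⟨[], [], rfl, by simp, by simp⟩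
  | node l r _ ihr =>
    obtain ⟨ws, w, hr, hws, hw⟩ := ihr
    refine ⟨(leafPaths l).map (· ++ [0]) ++ ws.map (· ++ [1]), w ++ [1], ?_, ?_, ?_⟩
    · simp [leafPaths, hr]
    · simp only [List.mem_append, List.mem_map]
      rintro _ (⟨v, -, rfl⟩ | ⟨v, hv, rfl⟩)
      · simp
      · simpa using hws v hv
    · simp [hw]

def wordOf (w : List (Fin 2)) : F2 := FreeGroup.mk (w.map (·, true))

theorem wordOf_injective : Function.Injective wordOf := by
  intro v w h
  have hred (u : List (Fin 2)) : FreeGroup.IsReduced (u.map (·, true)) := by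
    induction u with
    | nil => exact .nil
    | cons x u ih => exact ih.cons (by cases u <;> simp)
  have := FreeGroup.reduce.sound h
  rw [(hred v).reduce_eq, (hred w).reduce_eq] at this
  exact List.map_injective_iff.2 (fun x y hxy => by simpa using hxy) this

theorem wordOf_append_singleton (w : List (Fin 2)) (i : Fin 2) :
    wordOf (w ++ [i]) = wordOf w * FreeGroup.of i := by
  simp [wordOf, FreeGroup.of, FreeGroup.mul_mk]

theorem pathWords_eq_map_wordOf (t : BTree) : pathWords t = (leafPaths t).map wordOf := by
  induction t with
  | leaf => rfl
  | node l r ihl ihr =>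
    simp [pathWords, leafPaths, ihl, ihr, Function.comp_def, wordOf_append_singleton, a, b]

theorem forestWords_eq_map_wordOf (f : List BTree) :
    forestWords f = (f.map leafPaths).flatten.map wordOf := by
  rw [forestWords, List.map_flatten, List.map_map]
  congr 2
  exact funext pathWords_eq_map_wordOf

theorem exists_eq_rotate_of_forestWords_eq_rotate {p q : List BTree} {k : ℕ}
    (h : forestWords p = (forestWords q).rotate k) : ∃ n, p = q.rotate n := by
  rw [forestWords_eq_map_wordOf, forestWords_eq_map_wordOf, ← List.map_rotate,
    (List.map_injective_iff.2 wordOf_injective).eq_iff] at h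
  have hblocks (f : List BTree) : ∀ B ∈ f.map leafPaths, B.IsMarkedBlock (0 ∉ ·) :=
    List.forall_mem_map.2 fun t _ => isMarkedBlock_leafPaths t
  obtain ⟨n, hn⟩ := List.exists_eq_rotate_of_flatten_eq_rotate (hblocks q) (hblocks p) h
  exact ⟨n, List.map_injective_iff.2 leafPaths_injective (by rw [hn, List.map_rotate])⟩

end BTree

theorem stmt1 (p q : List BTree) (m : ℕ)
    (hp : (forestWords p).length = m) (hq : (forestWords q).length = m)
    (σ : Equiv.Perm (Fin m))
    (hσ : ∃ c : Fin m, ∀ i : Fin m, σ i = i + c)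
    (h : ∀ i : Fin m,
      (forestWords p).get (Fin.cast hp.symm i) = (forestWords q).get (Fin.cast hq.symm (σ i))) :
    p.length = q.length ∧
      ∃ a : ℕ, ∀ j : ℕ, j < p.length →
        p.getD j BTree.leaf = q.getD ((j + a) % q.length) BTree.leaf := by
  obtain ⟨c, hc⟩ := hσ
  have hrot : forestWords p = (forestWords q).rotate c := by
    refine List.ext_getElem (by simp [hp, hq]) fun i hi _ => ?_
    simpa [hc, Fin.val_add, List.getElem_rotate, hq] using h ⟨i, hp ▸ hi⟩
  obtain ⟨n, rfl⟩ := exists_eq_rotate_of_forestWords_eq_rotate hrot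
  refine ⟨List.length_rotate .., n, fun j hj => ?_⟩
  rw [List.length_rotate] at hj
  rw [List.getD_eq_getElem _ _ (by rwa [List.length_rotate]), List.getElem_rotate,
    List.getD_eq_getElem _ _ (Nat.mod_lt _ (by omega))]
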